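/- Let Ω be a bounded domain with compactification Ω̄¹ and f ∈ C(Ω̄¹) continuous real-valued. Then uW(f|_Ω) = uP_{Ω¹}(f|_{∂¹Ω}), lW(f|_Ω) = lP_{Ω¹}(f|_{∂¹Ω}), and the Sobolev analogues uZ = uS, lZ = lS hold. Consequently, f|_Ω is harmonizable if and only if f|_{∂¹Ω} is resolutive, in which case W f = P_{Ω¹} f (and similarly for the Sobolev versions). -/

import Mathlib

open Filter Set

/-- The filter of approach to a point `x` of the compactification from within `Ω`. -/
def approach {X : Type*} [TopologicalSpace X] (Ω : Set X) (x : X) : Filter ↥Ω :=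
  Filter.comap (Subtype.val : ↥Ω → X) (nhds x)

/-- An extended-real-valued function bounded from below by a real constant. -/
def BddBelowE {α : Type*} (u : α → EReal) : Prop :=
  ∃ m : ℝ, ∀ y, (m : EReal) ≤ u y

/-- The upper (Perron) class of a boundary function `f : ∂¹Ω → ℝ̄`. -/
def upperPerronClass {X : Type*} [TopologicalSpace X] (Ω : Set X)
    (SH : (↥Ω → EReal) → Prop) (f : {x : X // x ∉ Ω} → EReal) :
    Set (↥Ω → EReal) :=
  {u | SH u ∧ BddBelowE u ∧
    ∀ x : {x : X // x ∉ Ω}, f x ≤ liminf u (approach Ω (x : X))}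

/-- The upper Perron solution `uP_{Ω¹} f`. -/
noncomputable def uP {X : Type*} [TopologicalSpace X] (Ω : Set X)
    (SH : (↥Ω → EReal) → Prop) (f : {x : X // x ∉ Ω} → EReal) : ↥Ω → EReal :=
  fun z => ⨅ u ∈ upperPerronClass Ω SH f, u z

/-- The lower Perron solution `lP_{Ω¹} f := -uP_{Ω¹}(-f)`. -/
noncomputable def lP {X : Type*} [TopologicalSpace X] (Ω : Set X)
    (SH : (↥Ω → EReal) → Prop) (f : {x : X // x ∉ Ω} → EReal) : ↥Ω → EReal :=
  fun z => - uP Ω SH (fun x => - f x) z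

/-- The upper Wiener class `U^W_f` of `f : Ω → ℝ̄`. -/
def upperWienerClass {X : Type*} [TopologicalSpace X] (Ω : Set X)
    (SH : (↥Ω → EReal) → Prop) (f : ↥Ω → EReal) : Set (↥Ω → EReal) :=
  {u | SH u ∧ BddBelowE u ∧
    ∃ K : Set X, IsCompact K ∧ K ⊆ Ω ∧ ∀ y : ↥Ω, (y : X) ∉ K → f y ≤ u y}

/-- The upper Wiener solution `uW f`. -/
noncomputable def uW {X : Type*} [TopologicalSpace X] (Ω : Set X)
    (SH : (↥Ω → EReal) → Prop) (f : ↥Ω → EReal) : ↥Ω → EReal :=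
  fun z => ⨅ u ∈ upperWienerClass Ω SH f, u z

/-- The lower Wiener solution `lW f := -uW(-f)`. -/
noncomputable def lW {X : Type*} [TopologicalSpace X] (Ω : Set X)
    (SH : (↥Ω → EReal) → Prop) (f : ↥Ω → EReal) : ↥Ω → EReal :=
  fun z => - uW Ω SH (fun y => - f y) z

/-!
Both solutions are infima over classes of functions that are mapped into each other by adding
an arbitrarily small constant `ε > 0`. If `u` is in the upper Perron class, the set where
`u + ε < f` has closure inside `Ω`, since near a boundary point `x` we have `f ≈ f x ≤ liminf u`;
this closure is the compact set required of `u + ε` in the Wiener class. Conversely, if `f ≤ u`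
off a compact `K ⊆ Ω`, then near every boundary point `f x - ε < f ≤ u`. Letting `ε → 0` gives
`uW f = uP f`; the lower solutions follow by applying this to `-f`.
-/

open Topology

def ShiftInvariant {α : Type*} (SH : (α → EReal) → Prop) : Prop :=
  ∀ (u : α → EReal) (c : ℝ), SH u → SH (fun y => u y + (c : EReal))

lemma ShiftInvariant.and {α : Type*} {SH Dp : (α → EReal) → Prop} (hSH : ShiftInvariant SH)
    (hDp : ShiftInvariant Dp) : ShiftInvariant (fun u => SH u ∧ Dp u) :=
  fun u c h => ⟨hSH u c h.1, hDp u c h.2⟩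

lemma EReal.le_of_forall_pos_le_add_coe {a b : EReal}
    (h : ∀ ε : ℝ, 0 < ε → a ≤ b + ε) : a ≤ b := by
  refine le_of_forall_lt_iff_le.1 fun z hz => ?_
  induction b with
  | bot => exact (h 1 one_pos).trans (by simp)
  | coe r =>
    have := h (z - r) (_root_.sub_pos.2 (EReal.coe_lt_coe_iff.1 hz))
    rwa [← EReal.coe_add, add_sub_cancel] at this
  | top => exact absurd hz not_top_lt

lemma iInf₂_le_iInf₂_of_add_mem {α : Type*} {A B : Set (α → EReal)}
    (h : ∀ u ∈ A, ∀ ε : ℝ, 0 < ε → (fun y => u y + (ε : EReal)) ∈ B) (z : α) :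
    ⨅ v ∈ B, v z ≤ ⨅ u ∈ A, u z :=
  le_iInf₂ fun u hu => EReal.le_of_forall_pos_le_add_coe fun ε hε =>
    iInf₂_le_of_le _ (h u hu ε hε) le_rfl

lemma BddBelowE.add_coe {α : Type*} {u : α → EReal} (hu : BddBelowE u) (c : ℝ) :
    BddBelowE (fun y => u y + (c : EReal)) := by
  obtain ⟨m, hm⟩ := hu
  exact ⟨m + c, fun y => by rw [EReal.coe_add]; exact add_le_add_left (hm y) _⟩

section

variable {X : Type*} [TopologicalSpace X] {Ω : Set X} {SH : (↥Ω → EReal) → Prop}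

lemma notMem_closure_setOf_add_lt (f : C(X, ℝ)) {u : ↥Ω → EReal} {x : X}
    (hx : (f x : EReal) ≤ liminf u (approach Ω x)) {ε : ℝ} (hε : 0 < ε) :
    x ∉ closure (Subtype.val '' {y : ↥Ω | u y + (ε : EReal) < f y}) := by
  intro hcl
  have hnear : ∀ᶠ w in 𝓝 x, f w < f x + ε / 2 :=
    f.continuous.continuousAt.eventually_lt continuousAt_const (by linarith)
  have hfreq : ∃ᶠ y in approach Ω x, u y ≤ ((f x - ε / 2 : ℝ) : EReal) := by
    rw [approach, frequently_comap]
    refine ((mem_closure_iff_frequently.1 hcl).and_eventually hnear).mono ?_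
    rintro _ ⟨⟨y, hy, rfl⟩, hyx⟩
    refine ⟨y, rfl, (EReal.addLECancellable_coe ε).add_le_add_iff_right.1 ?_⟩
    calc u y + ε ≤ f y := hy.le
      _ ≤ ((f x - ε / 2 : ℝ) : EReal) + ε := by
        rw [← EReal.coe_add, EReal.coe_le_coe_iff]; linarith
  have := EReal.coe_le_coe_iff.1 (hx.trans (liminf_le_of_frequently_le' hfreq))
  linarith

lemma add_mem_upperWienerClass [CompactSpace X] (hSH : ShiftInvariant SH) (f : C(X, ℝ))
    {u : ↥Ω → EReal} (hu : u ∈ upperPerronClass Ω SH (fun x => (f x : EReal)))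
    {ε : ℝ} (hε : 0 < ε) :
    (fun y => u y + (ε : EReal)) ∈ upperWienerClass Ω SH (fun y => (f y : EReal)) := by
  obtain ⟨hu, hbdd, hbdry⟩ := hu
  refine ⟨hSH u ε hu, hbdd.add_coe ε, closure (Subtype.val '' {y | u y + ε < f y}),
    isClosed_closure.isCompact, fun x hx => ?_,
    fun y hy => not_lt.1 fun hlt => hy (subset_closure ⟨y, hlt, rfl⟩)⟩
  by_contra hxΩ
  exact notMem_closure_setOf_add_lt f (hbdry ⟨x, hxΩ⟩) hε hx

lemma add_mem_upperPerronClass [T2Space X] (hSH : ShiftInvariant SH) (f : C(X, ℝ))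
    {u : ↥Ω → EReal} (hu : u ∈ upperWienerClass Ω SH (fun y => (f y : EReal)))
    {ε : ℝ} (hε : 0 < ε) :
    (fun y => u y + (ε : EReal)) ∈ upperPerronClass Ω SH (fun x => (f x : EReal)) := by
  obtain ⟨hu, hbdd, K, hK, hKΩ, hfu⟩ := hu
  refine ⟨hSH u ε hu, hbdd.add_coe ε, fun x => le_liminf_of_le (by isBoundedDefault) ?_⟩
  have hnear : ∀ᶠ w in 𝓝 (x : X), w ∉ K ∧ f x - ε < f w :=
    Filter.Eventually.and (hK.isClosed.isOpen_compl.mem_nhds fun h => x.2 (hKΩ h))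
      (continuousAt_const.eventually_lt f.continuous.continuousAt (by linarith))
  rw [approach, eventually_comap]
  filter_upwards [hnear] with _ ⟨hwK, hfw⟩ y rfl
  calc ((f x : ℝ) : EReal) ≤ ((f y + ε : ℝ) : EReal) := by
        rw [EReal.coe_le_coe_iff]; linarith
    _ ≤ u y + ε := by rw [EReal.coe_add]; exact add_le_add_left (hfu y hwK) _

variable [CompactSpace X] [T2Space X]

lemma uW_eq_uP (hSH : ShiftInvariant SH) (f : C(X, ℝ)) (z : ↥Ω) :
    uW Ω SH (fun y => (f y : EReal)) z = uP Ω SH (fun x => (f x : EReal)) z :=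
  le_antisymm
    (iInf₂_le_iInf₂_of_add_mem (fun _ hu _ hε => add_mem_upperWienerClass hSH f hu hε) z)
    (iInf₂_le_iInf₂_of_add_mem (fun _ hu _ hε => add_mem_upperPerronClass hSH f hu hε) z)

lemma lW_eq_lP (hSH : ShiftInvariant SH) (f : C(X, ℝ)) (z : ↥Ω) :
    lW Ω SH (fun y => (f y : EReal)) z = lP Ω SH (fun x => (f x : EReal)) z := by
  simpa [lW, lP] using congrArg Neg.neg (uW_eq_uP hSH (-f) z)

end

theorem stmt_18_general {X : Type*} [TopologicalSpace X] [CompactSpace X] [T2Space X]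
    (Ω : Set X)
    (SH Dp : (↥Ω → EReal) → Prop)
    (hshiftSH : ∀ (u : ↥Ω → EReal) (c : ℝ), SH u → SH (fun y => u y + (c : EReal)))
    (hshiftDp : ∀ (u : ↥Ω → EReal) (c : ℝ), Dp u → Dp (fun y => u y + (c : EReal)))
    (f : C(X, ℝ)) :
    (∀ z, uW Ω SH (fun y : ↥Ω => (f y : EReal)) z =
        uP Ω SH (fun x : {x : X // x ∉ Ω} => ((f x : ℝ) : EReal)) z) ∧
    (∀ z, lW Ω SH (fun y : ↥Ω => (f y : EReal)) z =
        lP Ω SH (fun x : {x : X // x ∉ Ω} => ((f x : ℝ) : EReal)) z) ∧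
    (∀ z, uW Ω (fun u => SH u ∧ Dp u) (fun y : ↥Ω => (f y : EReal)) z =
        uP Ω (fun u => SH u ∧ Dp u) (fun x : {x : X // x ∉ Ω} => ((f x : ℝ) : EReal)) z) ∧
    (∀ z, lW Ω (fun u => SH u ∧ Dp u) (fun y : ↥Ω => (f y : EReal)) z =
        lP Ω (fun u => SH u ∧ Dp u) (fun x : {x : X // x ∉ Ω} => ((f x : ℝ) : EReal)) z) ∧
    ((∀ z, uW Ω SH (fun y : ↥Ω => (f y : EReal)) z =
        lW Ω SH (fun y : ↥Ω => (f y : EReal)) z) ↔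
      (∀ z, uP Ω SH (fun x : {x : X // x ∉ Ω} => ((f x : ℝ) : EReal)) z =
        lP Ω SH (fun x : {x : X // x ∉ Ω} => ((f x : ℝ) : EReal)) z)) ∧
    ((∀ z, uW Ω (fun u => SH u ∧ Dp u) (fun y : ↥Ω => (f y : EReal)) z =
        lW Ω (fun u => SH u ∧ Dp u) (fun y : ↥Ω => (f y : EReal)) z) ↔
      (∀ z, uP Ω (fun u => SH u ∧ Dp u)
          (fun x : {x : X // x ∉ Ω} => ((f x : ℝ) : EReal)) z =
        lP Ω (fun u => SH u ∧ Dp u)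
          (fun x : {x : X // x ∉ Ω} => ((f x : ℝ) : EReal)) z)) := by
  have hSobolev : ShiftInvariant (fun u => SH u ∧ Dp u) := ShiftInvariant.and hshiftSH hshiftDp
  have hu := uW_eq_uP hshiftSH f
  have hl := lW_eq_lP hshiftSH f
  have huS := uW_eq_uP hSobolev f
  have hlS := lW_eq_lP hSobolev f
  exact ⟨hu, hl, huS, hlS, by simp only [hu, hl], by simp only [huS, hlS]⟩

/-- let `Ω` be a bounded domain with compactification `X = Ω̄¹` and
let `f ∈ C(Ω̄¹)` be continuous and real-valued.  Then
`uW(f|_Ω) = uP_{Ω¹}(f|_{∂¹Ω})`, `lW(f|_Ω) = lP_{Ω¹}(f|_{∂¹Ω})`, and the Sobolev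
analogues `uZ = uS`, `lZ = lS` hold.  Consequently `f|_Ω` is harmonizable iff
`f|_{∂¹Ω}` is resolutive, in which case `W f = P_{Ω¹} f` (and similarly in the
Sobolev case).  Here `SH` is the (translation-invariant) class of superharmonic
functions and the Sobolev versions restrict to the Dirichlet space `Dp`. -/
theorem stmt_18 {X : Type*} [TopologicalSpace X] [CompactSpace X] [T2Space X]
    (Ω : Set X) (hopen : IsOpen Ω) (hdense : Dense Ω) (hne : Ω.Nonempty)
    (SH Dp : (↥Ω → EReal) → Prop)
    (hshiftSH : ∀ (u : ↥Ω → EReal) (c : ℝ), SH u → SH (fun y => u y + (c : EReal)))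
    (hshiftDp : ∀ (u : ↥Ω → EReal) (c : ℝ), Dp u → Dp (fun y => u y + (c : EReal)))
    (f : C(X, ℝ)) :
    (∀ z, uW Ω SH (fun y : ↥Ω => (f y : EReal)) z =
        uP Ω SH (fun x : {x : X // x ∉ Ω} => ((f x : ℝ) : EReal)) z) ∧
    (∀ z, lW Ω SH (fun y : ↥Ω => (f y : EReal)) z =
        lP Ω SH (fun x : {x : X // x ∉ Ω} => ((f x : ℝ) : EReal)) z) ∧
    (∀ z, uW Ω (fun u => SH u ∧ Dp u) (fun y : ↥Ω => (f y : EReal)) z =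
        uP Ω (fun u => SH u ∧ Dp u) (fun x : {x : X // x ∉ Ω} => ((f x : ℝ) : EReal)) z) ∧
    (∀ z, lW Ω (fun u => SH u ∧ Dp u) (fun y : ↥Ω => (f y : EReal)) z =
        lP Ω (fun u => SH u ∧ Dp u) (fun x : {x : X // x ∉ Ω} => ((f x : ℝ) : EReal)) z) ∧
    ((∀ z, uW Ω SH (fun y : ↥Ω => (f y : EReal)) z =
        lW Ω SH (fun y : ↥Ω => (f y : EReal)) z) ↔
      (∀ z, uP Ω SH (fun x : {x : X // x ∉ Ω} => ((f x : ℝ) : EReal)) z =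
        lP Ω SH (fun x : {x : X // x ∉ Ω} => ((f x : ℝ) : EReal)) z)) ∧
    ((∀ z, uW Ω (fun u => SH u ∧ Dp u) (fun y : ↥Ω => (f y : EReal)) z =
        lW Ω (fun u => SH u ∧ Dp u) (fun y : ↥Ω => (f y : EReal)) z) ↔
      (∀ z, uP Ω (fun u => SH u ∧ Dp u)
          (fun x : {x : X // x ∉ Ω} => ((f x : ℝ) : EReal)) z =
        lP Ω (fun u => SH u ∧ Dp u)
          (fun x : {x : X // x ∉ Ω} => ((f x : ℝ) : EReal)) z)) :=
  stmt_18_general Ω SH Dp hshiftSH hshiftDp f
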